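/- arXiv:1904.09251 — 2 statements merged into one kernel-verified Lean document; each statement's English description precedes it below -/
import Mathlib

section
/- (Closed form of Γ₂.) For every nonzero φ ∈ ℝ³, the matrix series Γ₂(φ) := Σ_{n=0}^∞ (1/(n+2)!) φ̂ⁿ converges and equals (1/2) I₃ + ((‖φ‖ − sin‖φ‖) / ‖φ‖³) φ̂ + ((‖φ‖² + 2 cos‖φ‖ − 2) / (2‖φ‖⁴)) φ̂², where ‖φ‖ is the Euclidean norm of φ. -/
/-!
Since `φ̂³ = -‖φ‖² φ̂`, the odd powers are `φ̂^(2k+1) = (-‖φ‖²)^k φ̂` and the even powers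
`φ̂^(2k+2) = (-‖φ‖²)^k φ̂²`. Splitting the series into its even and odd terms therefore leaves
`½ I₃` plus scalar series times `φ̂` and `φ̂²`, and these scalar series are the Taylor remainders
`t - sin t` and `cos t - 1 + t²/2` divided by `t³` and `t⁴`, for `t = ‖φ‖`.
-/

open Matrix

/-- The skew-symmetric (hat) matrix of a vector `φ ∈ ℝ³`, so that `skew φ *ᵥ x = φ × x`. -/
noncomputable def skew (φ : Fin 3 → ℝ) : Matrix (Fin 3) (Fin 3) ℝ :=
  !![0, -φ 2, φ 1; φ 2, 0, -φ 0; -φ 1, φ 0, 0]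

noncomputable def enorm3 (φ : Fin 3 → ℝ) : ℝ :=
  Real.sqrt (∑ i, φ i ^ 2)

lemma sq_enorm3 (φ : Fin 3 → ℝ) : enorm3 φ ^ 2 = ∑ i, φ i ^ 2 :=
  Real.sq_sqrt (Finset.sum_nonneg fun i _ => sq_nonneg (φ i))

lemma enorm3_ne_zero {φ : Fin 3 → ℝ} (hφ : φ ≠ 0) : enorm3 φ ≠ 0 := by
  intro h
  have hsum : ∑ i, φ i ^ 2 = 0 := by rw [← sq_enorm3, h, sq, zero_mul]
  refine hφ (funext fun i => pow_eq_zero_iff two_ne_zero |>.1 ?_)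
  exact congrFun ((Fintype.sum_eq_zero_iff_of_nonneg fun j => sq_nonneg (φ j)).1 hsum) i

lemma skew_pow_three (φ : Fin 3 → ℝ) : skew φ ^ 3 = (-enorm3 φ ^ 2) • skew φ := by
  rw [sq_enorm3, Fin.sum_univ_three, pow_three, skew, mul_fin_three, mul_fin_three,
    ← Matrix.ext_iff]
  intro i j
  fin_cases i <;> fin_cases j <;>
    simp only [Fin.zero_eta, Fin.mk_one, Fin.reduceFinMk, of_apply, cons_val', cons_val_zero,
      cons_val_one, cons_val, cons_val_fin_one, Matrix.smul_apply, smul_eq_mul] <;> ring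

section CubeRelation

variable {𝕜 R : Type*} [CommSemiring 𝕜] [Semiring R] [Algebra 𝕜 R] {A : R} {c : 𝕜}

lemma pow_two_mul_add_one_of_pow_three_eq_smul (hA : A ^ 3 = c • A) (k : ℕ) :
    A ^ (2 * k + 1) = c ^ k • A := by
  induction k with
  | zero => simp
  | succ k ih =>
    calc A ^ (2 * (k + 1) + 1) = A ^ (2 * k + 1) * A ^ 2 :=
        pow_add A (2 * k + 1) 2
      _ = c ^ k • A ^ 3 := by rw [ih, smul_mul_assoc, ← pow_succ']
      _ = c ^ (k + 1) • A := by rw [hA, smul_smul, pow_succ]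

lemma pow_two_mul_add_two_of_pow_three_eq_smul (hA : A ^ 3 = c • A) (k : ℕ) :
    A ^ (2 * k + 2) = c ^ k • A ^ 2 := by
  rw [pow_succ, pow_two_mul_add_one_of_pow_three_eq_smul hA, smul_mul_assoc, ← sq]

end CubeRelation

namespace Real

lemma hasSum_sin_remainder {t : ℝ} (ht : t ≠ 0) :
    HasSum (fun k : ℕ => (-t ^ 2) ^ k / (2 * k + 3).factorial) ((t - sin t) / t ^ 3) := by
  convert ((hasSum_nat_add_iff' 1).2 (hasSum_sin t)).div_const (-t ^ 3) using 1
  · rfl -- the two `AddCommMonoid ℝ` instances agree only up to unfolding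
  · funext k
    rw [show 2 * (k + 1) + 1 = 2 * k + 3 by ring, neg_pow, ← pow_mul]
    field_simp
    ring
  · simp only [Finset.sum_range_one, pow_zero, mul_zero, zero_add, pow_one, one_mul,
      Nat.factorial_one, Nat.cast_one, div_one]
    field_simp
    ring

lemma hasSum_cos_remainder {t : ℝ} (ht : t ≠ 0) :
    HasSum (fun k : ℕ => (-t ^ 2) ^ k / (2 * k + 4).factorial)
      ((t ^ 2 + 2 * cos t - 2) / (2 * t ^ 4)) := by
  convert ((hasSum_nat_add_iff' 2).2 (hasSum_cos t)).div_const (t ^ 4) using 1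
  · rfl
  · funext k
    rw [show 2 * (k + 2) = 2 * k + 4 by ring, neg_pow, ← pow_mul]
    field_simp
    ring
  · simp only [Finset.sum_range_succ, pow_zero, mul_zero, mul_one,
      Nat.factorial_zero, Nat.factorial_two, Nat.cast_one, Nat.cast_ofNat, div_one, pow_one,
      neg_mul, one_mul]
    field_simp
    ring

end Real

theorem hasSum_inv_factorial_add_two_smul_pow {R : Type*} [Semiring R] [Algebra ℝ R]
    [TopologicalSpace R] [ContinuousAdd R] [ContinuousSMul ℝ R] {A : R} {t : ℝ} (ht : t ≠ 0)
    (hA : A ^ 3 = (-t ^ 2) • A) :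
    HasSum (fun n : ℕ => ((n + 2).factorial : ℝ)⁻¹ • A ^ n)
      ((1 / 2 : ℝ) • 1 + ((t - Real.sin t) / t ^ 3) • A
        + ((t ^ 2 + 2 * Real.cos t - 2) / (2 * t ^ 4)) • A ^ 2) := by
  have hodd : HasSum (fun k : ℕ => ((2 * k + 1 + 2).factorial : ℝ)⁻¹ • A ^ (2 * k + 1))
      (((t - Real.sin t) / t ^ 3) • A) := by
    convert (Real.hasSum_sin_remainder ht).smul_const A using 2 with k
    rw [pow_two_mul_add_one_of_pow_three_eq_smul hA, smul_smul, div_eq_inv_mul]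
  have htail : HasSum (fun k : ℕ => ((2 * (k + 1) + 2).factorial : ℝ)⁻¹ • A ^ (2 * (k + 1)))
      (((t ^ 2 + 2 * Real.cos t - 2) / (2 * t ^ 4)) • A ^ 2) := by
    convert (Real.hasSum_cos_remainder ht).smul_const (A ^ 2) using 2 with k
    rw [mul_add, mul_one, pow_two_mul_add_two_of_pow_three_eq_smul hA, smul_smul, div_eq_inv_mul]
  have heven : HasSum (fun k : ℕ => ((2 * k + 2).factorial : ℝ)⁻¹ • A ^ (2 * k))
      ((1 / 2 : ℝ) • 1 + ((t ^ 2 + 2 * Real.cos t - 2) / (2 * t ^ 4)) • A ^ 2) := by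
    convert HasSum.zero_add (f := fun k : ℕ => ((2 * k + 2).factorial : ℝ)⁻¹ • A ^ (2 * k)) htail
      using 2
    norm_num
  convert HasSum.even_add_odd (f := fun n : ℕ => ((n + 2).factorial : ℝ)⁻¹ • A ^ n) heven hodd
    using 1
  abel

/-- **Closed form of `Γ₂`**: for nonzero `φ ∈ ℝ³`, the series
`Γ₂(φ) = Σ_{n=0}^∞ (1/(n+2)!) φ̂ⁿ` converges, with sum
`(1/2) I₃ + ((‖φ‖ − sin‖φ‖)/‖φ‖³) φ̂ + ((‖φ‖² + 2cos‖φ‖ − 2)/(2‖φ‖⁴)) φ̂²`. -/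
theorem gamma_two_closed_form (φ : Fin 3 → ℝ) (hφ : φ ≠ 0) :
    HasSum (fun n : ℕ => (((n + 2).factorial : ℝ))⁻¹ • skew φ ^ n)
      ((1 / 2 : ℝ) • (1 : Matrix (Fin 3) (Fin 3) ℝ)
        + ((enorm3 φ - Real.sin (enorm3 φ)) / enorm3 φ ^ 3) • skew φ
        + ((enorm3 φ ^ 2 + 2 * Real.cos (enorm3 φ) - 2) / (2 * enorm3 φ ^ 4)) • skew φ ^ 2) :=
  hasSum_inv_factorial_add_two_smul_pow (enorm3_ne_zero hφ) (skew_pow_three φ)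
end

section
/- (Exact discretization of the strapdown IMU dynamics under zero-order hold.) Fix ω, a, g ∈ ℝ³, a 3×3 real matrix R₀, and v₀, p₀ ∈ ℝ³. Define R(t) := R₀ · Γ₀(t ω), v(t) := v₀ + t g + t · R₀ · Γ₁(t ω) · a, and p(t) := p₀ + t v₀ + (t²/2) g + t² · R₀ · Γ₂(t ω) · a. Then for every t ∈ ℝ these curves are differentiable and satisfy the continuous-time dynamics: d/dt R(t) = R(t) · ω̂, d/dt v(t) = R(t) · a + g, and d/dt p(t) = v(t). Hence the discrete updates R_{k+1} = R_k Γ₀(ω Δt), v_{k+1} = v_k + R_k Γ₁(ω Δt) a Δt + g Δt, p_{k+1} = p_k + v_k Δt + R_k Γ₂(ω Δt) a Δt² + (1/2) g Δt² are an exact integration of the continuous system when the inputs are constant over the time step. -/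
open Matrix

/-- `Γₘ(φ) = Σ_{n=0}^∞ (1/(n+m)!) φ̂ⁿ`. -/
noncomputable def Gamma (m : ℕ) (φ : Fin 3 → ℝ) : Matrix (Fin 3) (Fin 3) ℝ :=
  ∑' n : ℕ, (((n + m).factorial : ℝ))⁻¹ • skew φ ^ n

/-!
Since `skew (t • ω) = t • ω̂`, we have `Γ₀(tω) = exp (t ω̂)`, whose derivative is `exp (t ω̂) ω̂`.
More generally `tᵏ Γₖ(tω) = Σₙ tⁿ⁺ᵏ/(n+k)! ω̂ⁿ`, and differentiating termwise (the series is
dominated by the exponential series of `r ω̂` on `|t| < r`) gives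
`d/dt (tᵏ⁺¹ Γₖ₊₁(tω)) = tᵏ Γₖ(tω)`; the cases `k = 0, 1` give `v̇` and `ṗ`.
Matrices are normed by the `L∞` operator norm, which makes them a complete normed algebra.
-/

open Nat

theorem hasDerivAt_pow_succ_div_factorial (m : ℕ) (y : ℝ) :
    HasDerivAt (fun s : ℝ => s ^ (m + 1) / (m + 1)!) (y ^ m / m !) y := by
  refine ((hasDerivAt_pow (m + 1) y).div_const ((m + 1)! : ℝ)).congr_deriv ?_
  rw [factorial_succ]
  push_cast
  field_simp

section ScaledGamma

variable {𝔸 : Type*}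

/-- `scaledGamma k x t = tᵏ Γₖ(t x)` (see `pow_smul_Gamma`). -/
noncomputable def scaledGamma [Ring 𝔸] [Module ℝ 𝔸] [TopologicalSpace 𝔸] (k : ℕ) (x : 𝔸)
    (t : ℝ) : 𝔸 :=
  ∑' n : ℕ, (t ^ (n + k) / (n + k)! : ℝ) • x ^ n

variable [NormedRing 𝔸] [NormedAlgebra ℝ 𝔸]

theorem norm_pow_div_factorial_smul_pow_le {r y : ℝ} (hy : |y| ≤ r) (k n : ℕ) (x : 𝔸) :
    ‖(y ^ (n + k) / (n + k)! : ℝ) • x ^ n‖ ≤ r ^ k * ‖((n !)⁻¹ : ℝ) • (r • x) ^ n‖ := by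
  have hr : 0 ≤ r := (abs_nonneg y).trans hy
  have hfact : (n ! : ℝ) ≤ (n + k)! := by exact_mod_cast factorial_le (le_add_right n k)
  rw [smul_pow, smul_smul, norm_smul, norm_smul, ← mul_assoc]
  gcongr
  calc ‖y ^ (n + k) / (n + k)!‖ = |y| ^ (n + k) / (n + k)! := by simp
    _ ≤ r ^ (n + k) / n ! := by gcongr
    _ = r ^ k * ((n ! : ℝ)⁻¹ * r ^ n) := by rw [pow_add]; field_simp
    _ = r ^ k * ‖(n ! : ℝ)⁻¹ * r ^ n‖ := by rw [Real.norm_of_nonneg (by positivity)]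

theorem hasDerivAt_scaledGamma_succ [CompleteSpace 𝔸] (k : ℕ) (x : 𝔸) (t : ℝ) :
    HasDerivAt (scaledGamma (k + 1) x) (scaledGamma k x t) t := by
  set r := |t| + 1
  have hr : 0 < r := by positivity
  refine hasDerivAt_tsum_of_isPreconnected
    ((NormedSpace.norm_expSeries_summable' (r • x)).mul_left (r ^ k))
    Metric.isOpen_ball (convex_ball (0 : ℝ) r).isPreconnected (fun n y _ => ?_)
    (fun n y hy => norm_pow_div_factorial_smul_pow_le (mem_ball_zero_iff.mp hy).le k n x)
    (Metric.mem_ball_self hr) ?_ (by simp [r])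
  · simpa only [add_assoc] using (hasDerivAt_pow_succ_div_factorial (n + k) y).smul_const (x ^ n)
  · simp [summable_zero]

end ScaledGamma

theorem skew_smul (s : ℝ) (ω : Fin 3 → ℝ) : skew (s • ω) = s • skew ω := by
  ext i j
  fin_cases i <;> fin_cases j <;> simp [skew]

theorem pow_smul_Gamma (k : ℕ) (t : ℝ) (ω : Fin 3 → ℝ) :
    t ^ k • Gamma k (t • ω) = scaledGamma k (skew ω) t := by
  rw [Gamma, ← tsum_const_smul'', scaledGamma]
  refine tsum_congr fun n => ?_
  rw [skew_smul, smul_pow, smul_smul, smul_smul, pow_add, div_eq_mul_inv]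
  ring_nf

theorem pow_smul_mulVec_Gamma (k : ℕ) (s : ℝ) (ω : Fin 3 → ℝ) (B : Matrix (Fin 3) (Fin 3) ℝ)
    (a : Fin 3 → ℝ) :
    s ^ k • (B *ᵥ (Gamma k (s • ω) *ᵥ a)) = (B * scaledGamma k (skew ω) s) *ᵥ a := by
  rw [← pow_smul_Gamma, mulVec_mulVec, Matrix.mul_smul, smul_mulVec]

theorem Gamma_zero_smul_eq_exp (t : ℝ) (ω : Fin 3 → ℝ) :
    Gamma 0 (t • ω) = NormedSpace.exp (t • skew ω) := by
  rw [NormedSpace.exp_eq_tsum ℝ, Gamma, skew_smul]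
  rfl

section OperatorNorm

open scoped Matrix.Norms.Operator

variable {n : Type*} [Fintype n] [DecidableEq n]

theorem hasDerivAt_mul_exp_smul_apply (B x : Matrix n n ℝ) (t : ℝ) (i j : n) :
    HasDerivAt (fun s => (B * NormedSpace.exp (s • x)) i j)
      ((B * NormedSpace.exp (t • x) * x) i j) t := by
  rw [Matrix.mul_assoc]
  exact (entryLinearMap ℝ ℝ i j).toContinuousLinearMap.hasFDerivAt.comp_hasDerivAt t
    ((hasDerivAt_exp_smul_const x t).const_mul B)

theorem hasDerivAt_mul_scaledGamma_succ_mulVec (B x : Matrix n n ℝ) (a : n → ℝ) (k : ℕ)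
    (t : ℝ) :
    HasDerivAt (fun s => (B * scaledGamma (k + 1) x s) *ᵥ a) ((B * scaledGamma k x t) *ᵥ a) t :=
  ((LinearMap.applyₗ a ∘ₗ toLin'.toLinearMap).toContinuousLinearMap.hasFDerivAt.comp_hasDerivAt
    t ((hasDerivAt_scaledGamma_succ k x t).const_mul B) :)

end OperatorNorm

/-- **Exact discretization of the strapdown IMU dynamics under zero-order hold.**
With constant inputs `ω`, `a` and gravity `g`, the curves
`R(t) = R₀ Γ₀(tω)`, `v(t) = v₀ + t g + t R₀ Γ₁(tω) a`,
`p(t) = p₀ + t v₀ + (t²/2) g + t² R₀ Γ₂(tω) a`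
are differentiable and satisfy `Ṙ = R ω̂`, `v̇ = R a + g`, `ṗ = v`; hence the discrete
strapdown updates are an exact integration of the continuous system. -/
theorem strapdown_discretization_exact
    (ω a g : Fin 3 → ℝ) (R₀ : Matrix (Fin 3) (Fin 3) ℝ) (v₀ p₀ : Fin 3 → ℝ)
    (R : ℝ → Matrix (Fin 3) (Fin 3) ℝ) (hRdef : R = fun t => R₀ * Gamma 0 (t • ω))
    (v : ℝ → Fin 3 → ℝ)
    (hvdef : v = fun t => v₀ + t • g + t • (R₀ *ᵥ (Gamma 1 (t • ω) *ᵥ a)))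
    (p : ℝ → Fin 3 → ℝ)
    (hpdef : p = fun t =>
      p₀ + t • v₀ + (t ^ 2 / 2) • g + (t ^ 2) • (R₀ *ᵥ (Gamma 2 (t • ω) *ᵥ a))) :
    (∀ (t : ℝ) (i j : Fin 3),
        HasDerivAt (fun s => R s i j) ((R t * skew ω) i j) t) ∧
    (∀ (t : ℝ) (i : Fin 3),
        HasDerivAt (fun s => v s i) ((R t *ᵥ a + g) i) t) ∧
    (∀ (t : ℝ) (i : Fin 3),
        HasDerivAt (fun s => p s i) (v t i) t) := by
  have hR_exp : R = fun s => R₀ * NormedSpace.exp (s • skew ω) := by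
    simp only [hRdef, Gamma_zero_smul_eq_exp]
  have hR_scaled : ∀ t, R t = R₀ * scaledGamma 0 (skew ω) t := fun t => by
    rw [hRdef, ← pow_smul_Gamma, pow_zero, one_smul]
  have hv : v = fun s => v₀ + s • g + (R₀ * scaledGamma 1 (skew ω) s) *ᵥ a := by
    simp only [hvdef, ← pow_smul_mulVec_Gamma, pow_one]
  have hp : p = fun s => p₀ + s • v₀ + (s ^ 2 / 2) • g + (R₀ * scaledGamma 2 (skew ω) s) *ᵥ a := by
    simp only [hpdef, ← pow_smul_mulVec_Gamma]
  refine ⟨fun t i j => ?_, fun t i => ?_, fun t i => ?_⟩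
  · rw [hR_exp]
    exact hasDerivAt_mul_exp_smul_apply R₀ (skew ω) t i j
  · have h := ((hasDerivAt_const t v₀).add ((hasDerivAt_id t).smul_const g)).add
      (hasDerivAt_mul_scaledGamma_succ_mulVec R₀ (skew ω) a 0 t)
    rw [hv]
    refine (hasDerivAt_pi.1 h i).congr_deriv ?_
    simp [hR_scaled, add_comm]
  · have h := (((hasDerivAt_const t p₀).add ((hasDerivAt_id t).smul_const v₀)).add
      (((hasDerivAt_pow 2 t).div_const 2).smul_const g)).add
      (hasDerivAt_mul_scaledGamma_succ_mulVec R₀ (skew ω) a 1 t)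
    rw [hp]
    refine (hasDerivAt_pi.1 h i).congr_deriv ?_
    simp [hv]
end
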